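/- Let p > 3 be a prime with p ≡ 3 (mod 4). The number of projective points on the elliptic curve y^2 = x^3 - x over F_p is exactly p + 1. -/

import Mathlib

/-!
Fibrewise, `y² = a` has `1 + χ(a)` solutions for the quadratic character `χ`, so the affine
curve has `p + ∑ₓ χ(x³ - x)` points. The substitution `x ↦ -x` negates `x³ - x`, and since
`χ(-1) = -1` for `p ≡ 3 (mod 4)` it negates every term of the sum, which therefore vanishes.
-/

section FiniteField

variable {F : Type*} [Field F] [Fintype F] [DecidableEq F]

theorem card_sq_eq_apply_eq_card_add_sum_quadraticChar (hF : ringChar F ≠ 2) (f : F → F) :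
    (Nat.card {v : F × F // v.2 ^ 2 = f v.1} : ℤ) =
      Fintype.card F + ∑ x, quadraticChar F (f x) := by
  have hfibre : ∀ x : F,
      (Fintype.card {y : F // y ^ 2 = f x} : ℤ) = quadraticChar F (f x) + 1 := by
    intro x
    rw [Fintype.card_subtype, ← Set.toFinset_ofPred]
    exact quadraticChar_card_sqrts hF (f x)
  rw [Nat.card_eq_fintype_card,
    Fintype.card_congr (Equiv.subtypeProdEquivSigmaSubtype fun x y => y ^ 2 = f x),
    Fintype.card_sigma]
  push_cast
  simp only [hfibre, Finset.sum_add_distrib, Finset.sum_const, Finset.card_univ, nsmul_eq_mul,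
    mul_one]
  ring

theorem sum_quadraticChar_eq_zero_of_odd (hneg : quadraticChar F (-1) = -1) {f : F → F}
    (hf : ∀ x, f (-x) = -f x) : ∑ x, quadraticChar F (f x) = 0 := by
  have hsymm : ∑ x, quadraticChar F (f (-x)) = ∑ x, quadraticChar F (f x) :=
    Fintype.sum_equiv (Equiv.neg F) _ _ fun _ => rfl
  have hterm : ∀ x, quadraticChar F (f (-x)) = -quadraticChar F (f x) := fun x => by
    rw [hf, neg_eq_neg_one_mul, map_mul, hneg, neg_one_mul]
  simp only [hterm, Finset.sum_neg_distrib] at hsymm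
  linarith

end FiniteField

theorem ZMod.quadraticChar_neg_one_of_mod_four_eq_three {p : ℕ} [Fact p.Prime] (hp : p % 4 = 3) :
    quadraticChar (ZMod p) (-1) = -1 := by
  rw [quadraticChar_neg_one (by rw [ZMod.ringChar_zmod_n]; omega), ZMod.card]
  exact ZMod.χ₄_nat_three_mod_four hp

theorem stmt_5_general (p : ℕ) [Fact p.Prime] (hmod : p % 4 = 3) :
    Nat.card {v : ZMod p × ZMod p // v.2 ^ 2 = v.1 ^ 3 - v.1} + 1 = p + 1 := by
  have hodd : ∀ x : ZMod p, (-x) ^ 3 - -x = -(x ^ 3 - x) := fun x => by ring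
  have hcount : (Nat.card {v : ZMod p × ZMod p // v.2 ^ 2 = v.1 ^ 3 - v.1} : ℤ) = p := by
    rw [card_sq_eq_apply_eq_card_add_sum_quadraticChar
        (by rw [ZMod.ringChar_zmod_n]; omega) fun x => x ^ 3 - x,
      sum_quadraticChar_eq_zero_of_odd (ZMod.quadraticChar_neg_one_of_mod_four_eq_three hmod) hodd,
      ZMod.card, add_zero]
  omega

/-- For a prime `p > 3` with `p ≡ 3 (mod 4)`, the number of projective points on the
elliptic curve `y² = x³ - x` over `F_p` (affine points plus the single point at infinity)
is exactly `p + 1`. -/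
theorem stmt_5 (p : ℕ) [Fact p.Prime] (hp : 3 < p) (hmod : p % 4 = 3) :
    Nat.card {v : ZMod p × ZMod p // v.2 ^ 2 = v.1 ^ 3 - v.1} + 1 = p + 1 :=
  stmt_5_general p hmod
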